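/- arXiv:1906.05153 — 2 statements merged into one kernel-verified Lean document; each statement's English description precedes it below -/
import Mathlib

section
/- Let g(x) = arccos(1−x) − (1−x)√(1−(1−x)²) for x ∈ [0,2]. Then for all x ∈ [0,2], x^{3/2} ≤ g(x) ≤ 2·x^{3/2}, where at x = 0 both sides vanish. -/
/-!
The segment area `g` satisfies `g(0) = 0` and `g'(x) = 2 √x √(2 - x)`, while
`(x^{3/2})' = (3/2) √x`. Since `2 √(2 - x) ≤ 2 √2 < 3`, the function `2 x^{3/2} - g` is
increasing, which gives the upper bound. The lower bound fails pointwise for the derivatives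
near `x = 2`: `g - x^{3/2}` increases up to `x = 23/16` and decreases after, so it is bounded
below by its endpoint values `0` and `π - 2√2 > 0`.
-/

open Real Set

noncomputable def circularSegmentArea (x : ℝ) : ℝ :=
  arccos (1 - x) - (1 - x) * √(1 - (1 - x) ^ 2)

theorem continuous_circularSegmentArea : Continuous circularSegmentArea := by
  unfold circularSegmentArea
  fun_prop

@[simp]
theorem circularSegmentArea_zero : circularSegmentArea 0 = 0 := by
  simp [circularSegmentArea]

@[simp]
theorem circularSegmentArea_two : circularSegmentArea 2 = π := by
  norm_num [circularSegmentArea]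

theorem hasDerivAt_circularSegmentArea {x : ℝ} (hx : x ∈ Ioo 0 2) :
    HasDerivAt circularSegmentArea (2 * (√x * √(2 - x))) x := by
  obtain ⟨hx0, hx2⟩ := hx
  have hdisc : 1 - (1 - x) ^ 2 = x * (2 - x) := by ring
  have hpos : 0 < x * (2 - x) := by nlinarith
  have hsub : HasDerivAt (fun y : ℝ => 1 - y) (-1) x := by
    simpa using (hasDerivAt_id x).const_sub 1
  have harccos : HasDerivAt (fun y => arccos (1 - y)) (-(1 / √(1 - (1 - x) ^ 2)) * -1) x :=
    (hasDerivAt_arccos (by linarith) (by linarith)).comp x hsub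
  have hsqrt : HasDerivAt (fun y => √(1 - (1 - y) ^ 2))
      (-(2 * (1 - x) ^ 1 * -1) / (2 * √(1 - (1 - x) ^ 2))) x :=
    ((hsub.pow 2).const_sub 1).sqrt (hdisc ▸ hpos.ne')
  refine (harccos.sub (hsub.mul hsqrt)).congr_deriv ?_
  have : 0 < √(2 - x) := sqrt_pos.2 (by linarith)
  have : 0 < √x := sqrt_pos.2 hx0
  rw [hdisc, sqrt_mul hx0.le]
  field_simp
  rw [sq_sqrt hx0.le, sq_sqrt (by linarith)]
  ring

theorem hasDerivAt_rpow_three_halves (x : ℝ) :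
    HasDerivAt (fun y : ℝ => y ^ (3 / 2 : ℝ)) (3 / 2 * √x) x := by
  convert hasDerivAt_rpow_const (x := x) (p := 3 / 2) (.inr (by norm_num)) using 2
  rw [sqrt_eq_rpow]
  norm_num

theorem two_rpow_three_halves : (2 : ℝ) ^ (3 / 2 : ℝ) = 2 * √2 := by
  rw [show (3 / 2 : ℝ) = 1 + 1 / 2 by norm_num, rpow_add two_pos, rpow_one, ← sqrt_eq_rpow]

theorem min_le_of_monotoneOn_of_antitoneOn {f : ℝ → ℝ} {a b c x : ℝ}
    (hmono : MonotoneOn f (Icc a c)) (hanti : AntitoneOn f (Icc c b)) (hx : x ∈ Icc a b) :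
    min (f a) (f b) ≤ f x := by
  rcases le_or_gt x c with hxc | hcx
  · exact min_le_of_left_le (hmono ⟨le_rfl, hx.1.trans hxc⟩ ⟨hx.1, hxc⟩ hx.1)
  · exact min_le_of_right_le (hanti ⟨hcx.le, hx.2⟩ ⟨hcx.le.trans hx.2, le_rfl⟩ hx.2)

theorem circularSegmentArea_le {x : ℝ} (hx : x ∈ Icc 0 2) :
    circularSegmentArea x ≤ 2 * x ^ (3 / 2 : ℝ) := by
  have hmono : MonotoneOn (fun y => 2 * y ^ (3 / 2 : ℝ) - circularSegmentArea y) (Icc 0 2) := by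
    refine monotoneOn_of_hasDerivWithinAt_nonneg (convex_Icc 0 2)
      (f' := fun y => √y * (3 - 2 * √(2 - y)))
      (((continuous_rpow_const (by norm_num)).const_mul 2).sub
        continuous_circularSegmentArea).continuousOn (fun y hy => ?_) (fun y hy => ?_)
    all_goals rw [interior_Icc] at hy
    · refine (((hasDerivAt_rpow_three_halves y).const_mul 2).sub
        (hasDerivAt_circularSegmentArea hy)).hasDerivWithinAt.congr_deriv ?_
      ring
    · have : √(2 - y) ≤ √2 := sqrt_le_sqrt (by linarith [hy.1])
      exact mul_nonneg (sqrt_nonneg y) (by linarith [sqrt_two_lt_three_halves])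
  have := hmono ⟨le_rfl, zero_le_two⟩ hx hx.1
  simp only [circularSegmentArea_zero, zero_rpow (by norm_num : (3 / 2 : ℝ) ≠ 0)] at this
  linarith

theorem rpow_three_halves_le_circularSegmentArea {x : ℝ} (hx : x ∈ Icc 0 2) :
    x ^ (3 / 2 : ℝ) ≤ circularSegmentArea x := by
  set p := fun y => circularSegmentArea y - y ^ (3 / 2 : ℝ)
  have hp : ContinuousOn p (Icc 0 2) :=
    (continuous_circularSegmentArea.sub (continuous_rpow_const (by norm_num))).continuousOn
  set p' := fun y => √y * (2 * √(2 - y) - 3 / 2)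
  have hp' : ∀ y ∈ Ioo (0 : ℝ) 2, HasDerivAt p (p' y) y := fun y hy => by
    refine ((hasDerivAt_circularSegmentArea hy).sub (hasDerivAt_rpow_three_halves y)).congr_deriv ?_
    ring
  -- `√(2 - y) = 3 / 4` exactly at `y = 23 / 16`
  have hmono : MonotoneOn p (Icc 0 (23 / 16)) := by
    refine monotoneOn_of_hasDerivWithinAt_nonneg (convex_Icc _ _) (f' := p')
      (hp.mono (Icc_subset_Icc_right (by norm_num))) (fun y hy => ?_) (fun y hy => ?_)
    all_goals rw [interior_Icc] at hy
    · exact (hp' y ⟨hy.1, by linarith [hy.2]⟩).hasDerivWithinAt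
    · have : 3 / 4 ≤ √(2 - y) := le_sqrt_of_sq_le (by linarith [hy.2])
      exact mul_nonneg (sqrt_nonneg y) (by linarith)
  have hanti : AntitoneOn p (Icc (23 / 16) 2) := by
    refine antitoneOn_of_hasDerivWithinAt_nonpos (convex_Icc _ _) (f' := p')
      (hp.mono (Icc_subset_Icc_left (by norm_num))) (fun y hy => ?_) (fun y hy => ?_)
    all_goals rw [interior_Icc] at hy
    · exact (hp' y ⟨by linarith [hy.1], hy.2⟩).hasDerivWithinAt
    · have : √(2 - y) ≤ 3 / 4 := sqrt_le_iff.2 ⟨by norm_num, by linarith [hy.1]⟩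
      exact mul_nonpos_of_nonneg_of_nonpos (sqrt_nonneg y) (by linarith)
  have hp0 : p 0 = 0 := by simp [p, zero_rpow (by norm_num : (3 / 2 : ℝ) ≠ 0)]
  have hp2 : 0 ≤ p 2 := by
    simp only [p, circularSegmentArea_two, two_rpow_three_halves]
    linarith [pi_gt_three, sqrt_two_lt_three_halves]
  have : 0 ≤ p x := (le_min hp0.ge hp2).trans (min_le_of_monotoneOn_of_antitoneOn hmono hanti hx)
  exact sub_nonneg.1 this

/-- For `g(x) = arccos(1-x) - (1-x)√(1-(1-x)²)` (the area of a circular segment of depth `x`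
of the unit circle): `x^(3/2) ≤ g(x) ≤ 2 x^(3/2)` for all `x ∈ [0,2]`. -/
theorem stmt_12 :
    ∀ x ∈ Set.Icc (0 : ℝ) 2,
      x ^ ((3 : ℝ) / 2) ≤ Real.arccos (1 - x) - (1 - x) * Real.sqrt (1 - (1 - x) ^ 2) ∧
      Real.arccos (1 - x) - (1 - x) * Real.sqrt (1 - (1 - x) ^ 2) ≤ 2 * x ^ ((3 : ℝ) / 2) := by
  intro x hx
  exact ⟨rpow_three_halves_le_circularSegmentArea hx, circularSegmentArea_le hx⟩
end

section
/- Let h(w) = ∫₀^w e^{i2πx/λ} φ(x) dx where φ: [0,W] → ℝ is positive, continuously differentiable, and satisfies φ(x) − φ(x + λ/2) ≥ δ > 0 for all x with x + λ/2 ≤ W, where W is an integer multiple of λ. Then Im(h(W)) ≥ (δ/π)·λ·(W/λ) > 0; in particular Im(h(W)) > 0. -/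
open Real Complex

/-!
Since `sin (2πx/λ)` changes sign under `x ↦ x + λ/2`, the two halves of every period pair up:
`∫_{jλ}^{(j+1)λ} sin (2πx/λ) φ x dx = ∫_0^{λ/2} sin (2πx/λ) (φ (x + jλ) - φ (x + jλ + λ/2)) dx`.
On `[0, λ/2]` the sine is nonnegative with integral `λ/π`, so each of the `k` periods contributes
at least `δ λ / π` to `Im h(W) = ∫_0^W sin (2πx/λ) φ x dx`.
-/

open intervalIntegral Set

theorem im_intervalIntegral_exp_mul_I_mul_ofReal {a b : ℝ} {θ φ : ℝ → ℝ} (hθ : Continuous θ)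
    (hφ : ContinuousOn φ (uIcc a b)) :
    (∫ x in a..b, exp (θ x * I) * (φ x : ℂ)).im = ∫ x in a..b, Real.sin (θ x) * φ x := by
  have hint : IntervalIntegrable (fun x => exp (θ x * I) * (φ x : ℂ)) MeasureTheory.volume a b :=
    ((by fun_prop : Continuous fun x => exp (θ x * I)).continuousOn.mul
      (continuous_ofReal.comp_continuousOn hφ)).intervalIntegrable
  refine (intervalIntegral_im hint).symm.trans (integral_congr fun x _ => ?_)
  simp [exp_ofReal_mul_I_re, exp_ofReal_mul_I_im]

section Wave

variable {lam δ : ℝ} {φ ψ : ℝ → ℝ}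

theorem antiperiodic_sin_two_pi_mul_div (hlam : lam ≠ 0) :
    Function.Antiperiodic (fun x => Real.sin (2 * π * x / lam)) (lam / 2) := fun x => by
  dsimp only
  rw [show 2 * π * (x + lam / 2) / lam = 2 * π * x / lam + π by field_simp]
  exact Real.sin_add_pi _

theorem integral_sin_two_pi_mul_div_half_period (hlam : lam ≠ 0) :
    ∫ x in (0 : ℝ)..lam / 2, Real.sin (2 * π * x / lam) = lam / π := by
  have hc : 2 * π / lam ≠ 0 := by positivity
  simp_rw [show ∀ x, 2 * π * x / lam = 2 * π / lam * x from fun x => by ring]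
  rw [integral_comp_mul_left Real.sin hc, mul_zero,
    show 2 * π / lam * (lam / 2) = π by field_simp, integral_sin, Real.cos_zero, Real.cos_pi,
    smul_eq_mul]
  field_simp
  ring

theorem sin_two_pi_mul_div_nonneg (hlam : 0 < lam) {x : ℝ} (hx : x ∈ Icc 0 (lam / 2)) :
    0 ≤ Real.sin (2 * π * x / lam) := by
  apply Real.sin_nonneg_of_nonneg_of_le_pi
  · have := hx.1; positivity
  · rw [div_le_iff₀ hlam]
    nlinarith [hx.2, Real.pi_pos]

theorem integral_sin_mul_period_eq_half_period (hlam : 0 < lam)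
    (hψ : ContinuousOn ψ (Icc 0 lam)) :
    ∫ x in (0 : ℝ)..lam, Real.sin (2 * π * x / lam) * ψ x =
      ∫ x in (0 : ℝ)..lam / 2, Real.sin (2 * π * x / lam) * (ψ x - ψ (x + lam / 2)) := by
  set s := fun x => Real.sin (2 * π * x / lam)
  have hs : ContinuousOn s (Icc 0 lam) := by fun_prop
  have hsψ : ContinuousOn (fun x => s x * ψ x) (Icc 0 lam) := hs.mul hψ
  have hfirst : IntervalIntegrable (fun x => s x * ψ x) MeasureTheory.volume 0 (lam / 2) :=
    (hsψ.mono (Icc_subset_Icc le_rfl (by linarith))).intervalIntegrable_of_Icc (by linarith)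
  have hlast : IntervalIntegrable (fun x => s x * ψ x) MeasureTheory.volume (lam / 2) lam :=
    (hsψ.mono (Icc_subset_Icc (by linarith) le_rfl)).intervalIntegrable_of_Icc (by linarith)
  have hshifted : IntervalIntegrable (fun x => s x * ψ (x + lam / 2)) MeasureTheory.volume
      0 (lam / 2) := by
    refine ContinuousOn.intervalIntegrable_of_Icc (by linarith) ?_
    refine (hs.mono (Icc_subset_Icc le_rfl (by linarith))).mul
      (hψ.comp (by fun_prop) fun x hx => ⟨?_, ?_⟩) <;> linarith [hx.1, hx.2]
  have hupper : ∫ x in lam / 2..lam, s x * ψ x =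
      ∫ x in (0 : ℝ)..lam / 2, -(s x * ψ (x + lam / 2)) := by
    have hshift := integral_comp_add_right (fun x => s x * ψ x) (lam / 2) (a := 0) (b := lam / 2)
    rw [zero_add, add_halves] at hshift
    rw [← hshift]
    refine integral_congr fun x _ => ?_
    simp only [antiperiodic_sin_two_pi_mul_div hlam.ne' x, s, neg_mul]
  rw [← integral_add_adjacent_intervals hfirst hlast, hupper, integral_neg, ← sub_eq_add_neg,
    ← integral_sub hfirst hshifted]
  simp only [s, mul_sub]

theorem le_integral_sin_mul_period (hlam : 0 < lam) (hψ : ContinuousOn ψ (Icc 0 lam))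
    (hdrop : ∀ x ∈ Icc 0 (lam / 2), δ ≤ ψ x - ψ (x + lam / 2)) :
    δ * (lam / π) ≤ ∫ x in (0 : ℝ)..lam, Real.sin (2 * π * x / lam) * ψ x := by
  have hdiff : ContinuousOn (fun x => Real.sin (2 * π * x / lam) * (ψ x - ψ (x + lam / 2)))
      (Icc 0 (lam / 2)) := by
    refine (by fun_prop : Continuous fun x => Real.sin (2 * π * x / lam)).continuousOn.mul
      ((hψ.mono (Icc_subset_Icc le_rfl (by linarith))).sub
        (hψ.comp (by fun_prop) fun x hx => ⟨?_, ?_⟩)) <;> linarith [hx.1, hx.2]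
  rw [integral_sin_mul_period_eq_half_period hlam hψ]
  calc δ * (lam / π) = ∫ x in (0 : ℝ)..lam / 2, Real.sin (2 * π * x / lam) * δ := by
        rw [integral_mul_const, integral_sin_two_pi_mul_div_half_period hlam.ne', mul_comm]
    _ ≤ _ := by
      refine integral_mono_on (by linarith) ((by fun_prop : Continuous fun x =>
        Real.sin (2 * π * x / lam) * δ).intervalIntegrable _ _) (hdiff.intervalIntegrable_of_Icc
        (by linarith)) fun x hx => ?_
      exact mul_le_mul_of_nonneg_left (hdrop x hx) (sin_two_pi_mul_div_nonneg hlam hx)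

theorem integral_sin_mul_shift_period (hlam : lam ≠ 0) (n : ℕ) :
    ∫ x in n * lam..(n + 1) * lam, Real.sin (2 * π * x / lam) * φ x =
      ∫ x in (0 : ℝ)..lam, Real.sin (2 * π * x / lam) * φ (x + n * lam) := by
  have hper := (antiperiodic_sin_two_pi_mul_div hlam).periodic_two_mul.nat_mul n
  rw [mul_div_cancel₀ _ two_ne_zero] at hper
  have hshift := integral_comp_add_right (fun x => Real.sin (2 * π * x / lam) * φ x) (n * lam)
    (a := 0) (b := lam)
  rw [zero_add, show lam + n * lam = (n + 1) * lam by ring] at hshift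
  rw [← hshift]
  exact integral_congr fun x _ => congrArg (· * φ (x + n * lam)) (hper x)

theorem le_integral_sin_mul_of_drop (hlam : 0 < lam) (k : ℕ)
    (hφ : ContinuousOn φ (Icc 0 (k * lam)))
    (hdrop : ∀ x, 0 ≤ x → x + lam / 2 ≤ k * lam → δ ≤ φ x - φ (x + lam / 2)) :
    k * (δ * (lam / π)) ≤ ∫ x in (0 : ℝ)..k * lam, Real.sin (2 * π * x / lam) * φ x := by
  have hperiod_le : ∀ j < k, ((j : ℝ) + 1) * lam ≤ k * lam := fun j hj => by
    gcongr
    exact_mod_cast hj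
  have hint : ∀ j < k, IntervalIntegrable (fun x => Real.sin (2 * π * x / lam) * φ x)
      MeasureTheory.volume (j * lam) ((j + 1 : ℕ) * lam) := fun j hj => by
    push_cast
    refine ContinuousOn.intervalIntegrable_of_Icc (by nlinarith) ?_
    exact (by fun_prop : Continuous fun x => Real.sin (2 * π * x / lam)).continuousOn.mul
      (hφ.mono (Icc_subset_Icc (by positivity) (hperiod_le j hj)))
  have hsum := sum_integral_adjacent_intervals hint
  push_cast at hsum
  rw [zero_mul] at hsum
  rw [← hsum, show (k : ℝ) * (δ * (lam / π)) = ∑ _j ∈ Finset.range k, δ * (lam / π) by simp]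
  refine Finset.sum_le_sum fun j hj => ?_
  have hperiod := hperiod_le j (Finset.mem_range.mp hj)
  rw [integral_sin_mul_shift_period hlam.ne']
  refine le_integral_sin_mul_period hlam (hφ.comp (by fun_prop) fun x hx => ⟨?_, ?_⟩)
    fun x hx => ?_
  · have := hx.1; positivity
  · nlinarith [hx.2]
  · rw [add_right_comm]
    exact hdrop _ (by have := hx.1; positivity) (by nlinarith [hx.2])

end Wave

theorem stmt_16_general (lam δ : ℝ) (k : ℕ) (φ : ℝ → ℝ)
    (hlam : 0 < lam) (hδ : 0 < δ) (hk : 1 ≤ k)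
    (hC1 : ContDiffOn ℝ 1 φ (Set.Icc (0 : ℝ) ((k : ℝ) * lam)))
    (hdrop : ∀ x : ℝ, 0 ≤ x → x + lam / 2 ≤ (k : ℝ) * lam → δ ≤ φ x - φ (x + lam / 2)) :
    (δ / π) * lam * (((k : ℝ) * lam) / lam) ≤
      (∫ x in (0 : ℝ)..((k : ℝ) * lam),
        Complex.exp (Complex.I * (2 * π * x / lam)) * (φ x : ℂ)).im ∧
    0 < (∫ x in (0 : ℝ)..((k : ℝ) * lam),
        Complex.exp (Complex.I * (2 * π * x / lam)) * (φ x : ℂ)).im := by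
  have hk' : (0 : ℝ) < k := by exact_mod_cast hk
  have hIm : (∫ x in (0 : ℝ)..k * lam, exp (I * (2 * π * x / lam)) * (φ x : ℂ)).im =
      ∫ x in (0 : ℝ)..k * lam, Real.sin (2 * π * x / lam) * φ x := by
    rw [← im_intervalIntegral_exp_mul_I_mul_ofReal (θ := fun x => 2 * π * x / lam) (by fun_prop)
      (uIcc_of_le (by positivity : (0 : ℝ) ≤ k * lam) ▸ hC1.continuousOn)]
    congr 2
    ext x
    push_cast
    ring_nf
  have hbound := le_integral_sin_mul_of_drop hlam k hC1.continuousOn hdrop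
  rw [hIm, show δ / π * lam * (k * lam / lam) = k * (δ * (lam / π)) by field_simp]
  exact ⟨hbound, lt_of_lt_of_le (by positivity) hbound⟩

/-- If `φ > 0` is `C¹` on `[0,W]` with `W = k·λ` a positive integer multiple of the
wavelength, and `φ(x) - φ(x+λ/2) ≥ δ > 0` whenever both points lie in `[0,W]`, then
`Im ∫₀^W e^{i2πx/λ} φ(x) dx ≥ (δ/π)·λ·(W/λ) > 0`. -/
theorem stmt_16 (lam δ : ℝ) (k : ℕ) (φ : ℝ → ℝ)
    (hlam : 0 < lam) (hδ : 0 < δ) (hk : 1 ≤ k)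
    (hpos : ∀ x ∈ Set.Icc (0 : ℝ) ((k : ℝ) * lam), 0 < φ x)
    (hC1 : ContDiffOn ℝ 1 φ (Set.Icc (0 : ℝ) ((k : ℝ) * lam)))
    (hdrop : ∀ x : ℝ, 0 ≤ x → x + lam / 2 ≤ (k : ℝ) * lam → δ ≤ φ x - φ (x + lam / 2)) :
    (δ / π) * lam * (((k : ℝ) * lam) / lam) ≤
      (∫ x in (0 : ℝ)..((k : ℝ) * lam),
        Complex.exp (Complex.I * (2 * π * x / lam)) * (φ x : ℂ)).im ∧
    0 < (∫ x in (0 : ℝ)..((k : ℝ) * lam),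
        Complex.exp (Complex.I * (2 * π * x / lam)) * (φ x : ℂ)).im :=
  stmt_16_general lam δ k φ hlam hδ hk hC1 hdrop
end
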